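/- Assume (A1), (A2) and (A3). Then, almost surely, the posterior under the flat prior is proper for all sufficiently large n; that is, with probability one there exists N such that for all n ≥ N, the design matrix formed by X₁,…,X_n has full column rank and ∫_{ℝ^p} ∏_{i=1}^n Φ(X_iᵀβ)^{Y_i} (1−Φ(X_iᵀβ))^{1−Y_i} dβ < ∞. -/

import Mathlib

/-!
Sign each regressor by its response, `zᵢ = xᵢ` if `yᵢ = 1` and `zᵢ = -xᵢ` otherwise; since
`1 - Φ(u) = Φ(-u)` the likelihood is `∏ Φ(zᵢ ⬝ β)`. If the `zᵢ` meet every open orthant, then for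
each `β` the `zᵢ` lying in the orthant opposite to the sign pattern of `β` has
`zᵢ ⬝ β ≤ -m ‖β‖₁` for one `m > 0`. Hence `zᵢ ⬝ β ≠ 0` for `β ≠ 0`, which gives full rank, and the
Gaussian tail bound `Φ(u) ≤ e^{1/2} eᵘ` dominates the likelihood by an integrable product of
Laplace densities. By (A3) and `0 < G < 1` each orthant contains `z₁` with positive probability, so
by the second Borel–Cantelli lemma almost surely every orthant is met by some `zᵢ`.
-/

open MeasureTheory Matrix

noncomputable section

/-- standard normal pdf -/
def nphi (x : ℝ) : ℝ := (Real.sqrt (2 * Real.pi))⁻¹ * Real.exp (-(x ^ 2) / 2)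

/-- standard normal cdf -/
def nPhi (x : ℝ) : ℝ := ∫ t in Set.Iic x, nphi t

/-- membership of x in the open orthant of ℝ^p determined by the sign pattern s -/
def inOrth {p : ℕ} (s : Fin p → Bool) (x : Fin p → ℝ) : Prop :=
  ∀ k, if s k then 0 < x k else x k < 0

open Set Filter Topology ProbabilityTheory Real

lemma nphi_eq_gaussianPDFReal : nphi = gaussianPDFReal 0 1 := by
  ext x; simp [nphi, gaussianPDFReal]

lemma nphi_nonneg (t : ℝ) : 0 ≤ nphi t :=
  nphi_eq_gaussianPDFReal ▸ gaussianPDFReal_nonneg 0 1 t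

lemma integrable_nphi : Integrable nphi :=
  nphi_eq_gaussianPDFReal ▸ integrable_gaussianPDFReal 0 1

lemma integral_nphi : ∫ t, nphi t = 1 :=
  nphi_eq_gaussianPDFReal ▸ integral_gaussianPDFReal_eq_one 0 one_ne_zero

lemma nphi_neg (t : ℝ) : nphi (-t) = nphi t := by simp [nphi]

lemma nphi_le_mul_exp (t : ℝ) : nphi t ≤ exp (1 / 2) * exp t := by
  have hc : (√(2 * π))⁻¹ ≤ 1 :=
    inv_le_one_of_one_le₀ (one_le_sqrt.2 (by nlinarith [pi_gt_three]))
  calc nphi t ≤ 1 * exp (-(t ^ 2) / 2) := mul_le_mul_of_nonneg_right hc (exp_pos _).le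
    _ ≤ exp (1 / 2 + t) := by rw [one_mul]; exact exp_le_exp.2 (by nlinarith [sq_nonneg (t + 1)])
    _ = exp (1 / 2) * exp t := exp_add _ _

lemma nPhi_nonneg (u : ℝ) : 0 ≤ nPhi u :=
  setIntegral_nonneg measurableSet_Iic fun t _ => nphi_nonneg t

lemma nPhi_le_one (u : ℝ) : nPhi u ≤ 1 :=
  integral_nphi ▸ setIntegral_le_integral integrable_nphi (Eventually.of_forall nphi_nonneg)

lemma monotone_nPhi : Monotone nPhi := fun _ _ hab =>
  setIntegral_mono_set integrable_nphi.integrableOn (Eventually.of_forall nphi_nonneg)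
    (Eventually.of_forall (Iic_subset_Iic.2 hab))

@[fun_prop]
lemma measurable_nPhi : Measurable nPhi := monotone_nPhi.measurable

lemma one_sub_nPhi (u : ℝ) : 1 - nPhi u = nPhi (-u) := by
  have h := integral_add_compl (measurableSet_Iic (a := u)) integrable_nphi
  rw [compl_Iic, integral_nphi] at h
  rw [nPhi, nPhi, ← integral_comp_neg_Ioi]
  simp only [nphi_neg]
  linarith

lemma nPhi_le_mul_exp (u : ℝ) : nPhi u ≤ exp (1 / 2) * exp u :=
  calc nPhi u ≤ ∫ t in Iic u, exp (1 / 2) * exp t :=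
        setIntegral_mono_on integrable_nphi.integrableOn
          ((integrableOn_exp_Iic u).const_mul _) measurableSet_Iic fun t _ => nphi_le_mul_exp t
    _ = exp (1 / 2) * exp u := by rw [integral_const_mul, integral_exp_Iic]

lemma integrable_exp_neg_mul_abs {m : ℝ} (hm : 0 < m) :
    Integrable fun t : ℝ => exp (-(m * |t|)) := by
  rw [← integrableOn_univ, ← Iic_union_Ioi (a := 0)]
  refine ((integrableOn_exp_mul_Iic hm 0).congr_fun (fun t ht => ?_) measurableSet_Iic).union
    ((integrableOn_exp_mul_Ioi (neg_neg_of_pos hm) 0).congr_fun (fun t ht => ?_) measurableSet_Ioi)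
  · rw [abs_of_nonpos ht, mul_neg, neg_neg]
  · simp only [abs_of_pos (mem_Ioi.1 ht), neg_mul]

section Orthant

variable {p : ℕ}

lemma inOrth.ne_zero {s : Fin p → Bool} {z : Fin p → ℝ} (hz : inOrth s z) (k : Fin p) :
    z k ≠ 0 := by
  have := hz k
  split_ifs at this
  exacts [this.ne', this.ne]

lemma measurableSet_inOrth (s : Fin p → Bool) : MeasurableSet {z : Fin p → ℝ | inOrth s z} := by
  simp only [inOrth, ofPred_forall]
  refine MeasurableSet.iInter fun k => ?_
  split_ifs
  exacts [measurableSet_lt measurable_const (measurable_pi_apply k),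
    measurableSet_lt (measurable_pi_apply k) measurable_const]

lemma dotProduct_le_of_inOrth {β z : Fin p → ℝ} (hz : inOrth (fun k => decide (β k < 0)) z)
    {m : ℝ} (hm : ∀ k, m ≤ |z k|) : z ⬝ᵥ β ≤ -(m * ∑ k, |β k|) := by
  rw [dotProduct, Finset.mul_sum, ← Finset.sum_neg_distrib]
  refine Finset.sum_le_sum fun k _ => ?_
  have hzk := hz k
  have hterm : z k * β k = -(|z k| * |β k|) := by
    by_cases hβ : β k < 0
    · simp only [hβ, decide_true, if_true] at hzk
      rw [abs_of_pos hzk, abs_of_neg hβ]; ring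
    · simp only [hβ, decide_false, Bool.false_eq_true, if_false] at hzk
      rw [abs_of_neg hzk, abs_of_nonneg (not_lt.1 hβ)]; ring
  rw [hterm, neg_le_neg_iff]
  exact mul_le_mul_of_nonneg_right (hm k) (abs_nonneg _)

lemma exists_dotProduct_le_neg_mul_sum_abs {ι : Type*} {z : ι → Fin p → ℝ}
    (hz : ∀ s, ∃ i, inOrth s (z i)) :
    ∃ m > 0, ∀ β : Fin p → ℝ, ∃ i, z i ⬝ᵥ β ≤ -(m * ∑ k, |β k|) := by
  choose w hw using hz
  have hsmall : ∀ᶠ m in 𝓝[>] (0 : ℝ), ∀ s k, m ≤ |z (w s) k| :=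
    eventually_all.2 fun s => eventually_all.2 fun k =>
      eventually_nhdsWithin_of_eventually_nhds
        (eventually_le_nhds (abs_pos.2 ((hw s).ne_zero k)))
  obtain ⟨m, hm, hpos⟩ := (hsmall.and self_mem_nhdsWithin).exists
  exact ⟨m, hpos, fun β => ⟨_, dotProduct_le_of_inOrth (hw _) (hm _)⟩⟩

lemma exists_dotProduct_neg {ι : Type*} {z : ι → Fin p → ℝ} (hz : ∀ s, ∃ i, inOrth s (z i))
    {β : Fin p → ℝ} (hβ : β ≠ 0) : ∃ i, z i ⬝ᵥ β < 0 := by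
  obtain ⟨m, hm, hneg⟩ := exists_dotProduct_le_neg_mul_sum_abs hz
  obtain ⟨k, hk⟩ := Function.ne_iff.1 hβ
  obtain ⟨i, hi⟩ := hneg β
  have hsum : 0 < ∑ k, |β k| :=
    Finset.sum_pos' (fun k _ => abs_nonneg _) ⟨k, Finset.mem_univ k, abs_pos.2 hk⟩
  exact ⟨i, hi.trans_lt (neg_neg_of_pos (mul_pos hm hsum))⟩

lemma rank_eq_of_forall_exists_dotProduct_ne_zero {ι : Type*} [Fintype ι] {x : ι → Fin p → ℝ}
    (hx : ∀ β ≠ 0, ∃ i, x i ⬝ᵥ β ≠ 0) : (Matrix.of x).rank = p := by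
  have hinj : Function.Injective (Matrix.of x).mulVecLin := by
    rw [← LinearMap.ker_eq_bot, ker_mulVecLin_eq_bot_iff]
    intro β hβ
    by_contra hne
    obtain ⟨i, hi⟩ := hx β hne
    exact hi (congrFun hβ i)
  rw [rank, LinearMap.finrank_range_of_inj hinj, Module.finrank_fin_fun]

lemma integrable_prod_nPhi_dotProduct {ι : Type*} [Fintype ι] {z : ι → Fin p → ℝ}
    (hz : ∀ s, ∃ i, inOrth s (z i)) :
    Integrable fun β : Fin p → ℝ => ∏ i, nPhi (z i ⬝ᵥ β) := by
  obtain ⟨m, hm, hneg⟩ := exists_dotProduct_le_neg_mul_sum_abs hz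
  have hdom : Integrable fun β : Fin p → ℝ => exp (1 / 2) * ∏ k, exp (-(m * |β k|)) :=
    (Integrable.fintype_prod fun _ => integrable_exp_neg_mul_abs hm).const_mul _
  refine hdom.mono' (by fun_prop : Measurable _).aestronglyMeasurable
    (Eventually.of_forall fun β => ?_)
  obtain ⟨i, hi⟩ := hneg β
  rw [Real.norm_of_nonneg (Finset.prod_nonneg fun j _ => nPhi_nonneg _)]
  calc ∏ j, nPhi (z j ⬝ᵥ β) ≤ ∏ j ∈ {i}, nPhi (z j ⬝ᵥ β) :=
        Finset.prod_le_prod_of_subset_of_le_one (Finset.subset_univ _)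
          (fun j _ => nPhi_nonneg _) fun j _ _ => nPhi_le_one _
    _ ≤ exp (1 / 2) * exp (-(m * ∑ k, |β k|)) := by
        rw [Finset.prod_singleton]
        exact (nPhi_le_mul_exp _).trans (by gcongr)
    _ = exp (1 / 2) * ∏ k, exp (-(m * |β k|)) := by
        rw [← exp_sum, Finset.mul_sum, Finset.sum_neg_distrib]

end Orthant

def signedObs {E : Type*} [Neg E] (y : Bool) (x : E) : E := if y then x else -x

section SignedObs

variable {p : ℕ}

lemma signedObs_dotProduct (y : Bool) (x β : Fin p → ℝ) :
    signedObs y x ⬝ᵥ β = if y then x ⬝ᵥ β else -(x ⬝ᵥ β) := by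
  cases y <;> simp [signedObs]

lemma measurableSet_inOrth_signedObs (s : Fin p → Bool) :
    MeasurableSet {q : (Fin p → ℝ) × Bool | inOrth s (signedObs q.2 q.1)} :=
  (Measurable.ite (measurable_snd (measurableSet_singleton true)) measurable_fst
    measurable_fst.neg) (measurableSet_inOrth s)

lemma ite_nPhi_eq_nPhi_signedObs (y : Bool) (x β : Fin p → ℝ) :
    (if y then nPhi (x ⬝ᵥ β) else 1 - nPhi (x ⬝ᵥ β)) = nPhi (signedObs y x ⬝ᵥ β) := by
  cases y <;> simp [signedObs, one_sub_nPhi]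

theorem rank_eq_and_integrable_likelihood {n : ℕ} (x : Fin n → Fin p → ℝ) (y : Fin n → Bool)
    (hcover : ∀ s, ∃ i, inOrth s (signedObs (y i) (x i))) :
    (Matrix.of x).rank = p ∧
      Integrable fun β : Fin p → ℝ =>
        ∏ i, if y i then nPhi (x i ⬝ᵥ β) else 1 - nPhi (x i ⬝ᵥ β) := by
  refine ⟨rank_eq_of_forall_exists_dotProduct_ne_zero fun β hβ => ?_, ?_⟩
  · obtain ⟨i, hi⟩ := exists_dotProduct_neg hcover hβ
    refine ⟨i, fun h => ?_⟩
    rw [signedObs_dotProduct, h, neg_zero, ite_self] at hi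
    exact hi.false
  · simp only [ite_nPhi_eq_nPhi_signedObs]
    exact integrable_prod_nPhi_dotProduct hcover

end SignedObs

section Probability

variable {Ω : Type*} [MeasurableSpace Ω] {P : Measure Ω} [IsProbabilityMeasure P]

lemma integrable_comp_of_mem_Ioo {E : Type*} [MeasurableSpace E] {X : Ω → E} (hX : Measurable X)
    {g : E → ℝ} (hg : Measurable g) (hg_range : ∀ x, g x ∈ Ioo (0 : ℝ) 1) :
    Integrable (fun ω => g (X ω)) P :=
  .of_bound (hg.comp hX).aestronglyMeasurable 1 <| Eventually.of_forall fun ω =>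
    (Real.norm_of_nonneg (hg_range (X ω)).1.le).trans_le (hg_range (X ω)).2.le

lemma setIntegral_comp_pos {E : Type*} [MeasurableSpace E] {X : Ω → E} (hX : Measurable X)
    {g : E → ℝ} (hg : Measurable g) (hg_range : ∀ x, g x ∈ Ioo (0 : ℝ) 1) {S : Set Ω}
    (hS : 0 < P S) : 0 < ∫ ω in S, g (X ω) ∂P := by
  rw [setIntegral_pos_iff_support_of_nonneg_ae
    (Eventually.of_forall fun ω => (hg_range (X ω)).1.le)
    (integrable_comp_of_mem_Ioo hX hg hg_range).integrableOn]
  have hsupp : Function.support (fun ω => g (X ω)) = univ :=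
    eq_univ_of_forall fun ω => (hg_range (X ω)).1.ne'
  rwa [hsupp, univ_inter]

lemma measure_mem_and_eq_pos {E : Type*} [MeasurableSpace E] {X : Ω → E} {Y : Ω → Bool}
    (hX : Measurable X) {G : E → ℝ} (hG : Measurable G) (hG_range : ∀ x, G x ∈ Ioo (0 : ℝ) 1)
    (hbern : ∀ A : Set E, MeasurableSet A →
      (P {ω | X ω ∈ A ∧ Y ω = true}).toReal = ∫ ω in {ω | X ω ∈ A}, G (X ω) ∂P)
    {A : Set E} (hA : MeasurableSet A) (hpos : 0 < P (X ⁻¹' A)) (b : Bool) :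
    0 < P {ω | X ω ∈ A ∧ Y ω = b} := by
  have htrue : (P {ω | X ω ∈ A ∧ Y ω = true}).toReal = ∫ ω in X ⁻¹' A, G (X ω) ∂P :=
    hbern A hA
  cases b
  · rw [pos_iff_ne_zero]
    intro hfalse
    have hle : P (X ⁻¹' A) ≤ P {ω | X ω ∈ A ∧ Y ω = true} :=
      calc P (X ⁻¹' A)
          ≤ P ({ω | X ω ∈ A ∧ Y ω = true} ∪ {ω | X ω ∈ A ∧ Y ω = false}) :=
            measure_mono fun ω hω => (Y ω).eq_false_or_eq_true.elim
              (fun h => Or.inl ⟨hω, h⟩) fun h => Or.inr ⟨hω, h⟩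
        _ ≤ _ := (measure_union_le _ _).trans_eq (by rw [hfalse, add_zero])
    have hcompl : 0 < ∫ ω in X ⁻¹' A, (1 - G (X ω)) ∂P :=
      setIntegral_comp_pos hX (measurable_const.sub hG)
        (fun x => ⟨sub_pos.2 (hG_range x).2, sub_lt_self _ (hG_range x).1⟩) hpos
    rw [integral_sub (integrable_const 1) (integrable_comp_of_mem_Ioo hX hG hG_range).integrableOn,
      setIntegral_const, smul_eq_mul, mul_one, measureReal_def] at hcompl
    linarith [ENNReal.toReal_mono (measure_ne_top _ _) hle]
  · exact (ENNReal.toReal_pos_iff.1 (htrue ▸ setIntegral_comp_pos hX hG hG_range hpos)).1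

open Classical in
lemma measure_inOrth_signedObs_pos {p : ℕ} {X : Ω → Fin p → ℝ} {Y : Ω → Bool} (hX : Measurable X)
    {G : (Fin p → ℝ) → ℝ} (hG : Measurable G) (hG_range : ∀ x, G x ∈ Ioo (0 : ℝ) 1)
    (hbern : ∀ A : Set (Fin p → ℝ), MeasurableSet A →
      (P {ω | X ω ∈ A ∧ Y ω = true}).toReal = ∫ ω in {ω | X ω ∈ A}, G (X ω) ∂P)
    (s : Fin p → Bool) (c : Ω → ℝ)
    (hA3 : 0 < P {ω | ((if inOrth s (X ω) then (1 : ℝ) else 0) +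
      (if inOrth s (-(X ω)) then (1 : ℝ) else 0)) * c ω ≠ 0}) :
    0 < P {ω | inOrth s (signedObs (Y ω) (X ω))} := by
  have hsub : {ω | ((if inOrth s (X ω) then (1 : ℝ) else 0) +
      (if inOrth s (-(X ω)) then (1 : ℝ) else 0)) * c ω ≠ 0} ⊆
      X ⁻¹' {x | inOrth s x} ∪ X ⁻¹' {x | inOrth s (-x)} := by
    intro ω hω
    by_contra h
    simp only [mem_union, mem_preimage, mem_ofPred_eq, not_or] at h
    simp [h.1, h.2] at hω
  have hunion := hA3.trans_le ((measure_mono hsub).trans (measure_union_le _ _))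
  rcases add_pos_iff.1 hunion with h | h
  · refine (measure_mem_and_eq_pos hX hG hG_range hbern (measurableSet_inOrth s) h true).trans_le
      (measure_mono fun ω hω => ?_)
    simpa [signedObs, hω.2] using hω.1
  · refine (measure_mem_and_eq_pos hX hG hG_range hbern
      (measurable_neg (measurableSet_inOrth s)) h false).trans_le (measure_mono fun ω hω => ?_)
    simpa [signedObs, hω.2] using hω.1

lemma ae_frequently_mem_of_iIndepFun {E : Type*} [MeasurableSpace E] {f : ℕ → Ω → E}
    (hf : ∀ i, Measurable (f i)) (hind : iIndepFun f P)
    (hident : ∀ i, P.map (f i) = P.map (f 0)) {B : Set E} (hB : MeasurableSet B)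
    (hpos : 0 < P (f 0 ⁻¹' B)) : ∀ᵐ ω ∂P, ∃ᶠ i in atTop, f i ω ∈ B := by
  have hsame : ∀ i, P (f i ⁻¹' B) = P (f 0 ⁻¹' B) := fun i => by
    rw [← Measure.map_apply (hf i) hB, hident i, Measure.map_apply (hf 0) hB]
  have hindep : iIndepSet (fun i => f i ⁻¹' B) P :=
    (iIndepSet_iff_meas_biInter fun i => hf i hB).2 fun S =>
      hind.measure_inter_preimage_eq_mul S fun _ _ => hB
  have hlimsup : P (limsup (fun i => f i ⁻¹' B) atTop) = 1 :=
    measure_limsup_eq_one (fun i => hf i hB) hindep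
      (by simp_rw [hsame]; exact ENNReal.tsum_const_eq_top_of_ne_zero hpos.ne')
  rw [← mem_ae_iff_prob_eq_one (.measurableSet_limsup fun i => hf i hB)] at hlimsup
  filter_upwards [hlimsup] with ω hω
  exact mem_limsup_iff_frequently_mem.1 hω

end Probability

open Classical in
theorem posterior_proper_eventually_general
    (p : ℕ) (hp : 1 ≤ p)
    (Ω : Type*) [MeasurableSpace Ω] (P : Measure Ω) [IsProbabilityMeasure P]
    (Xs : ℕ → Ω → Fin p → ℝ) (Ys : ℕ → Ω → Bool)
    (hXmeas : ∀ i, Measurable (Xs i)) (hYmeas : ∀ i, Measurable (Ys i))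
    -- (A1)
    (hindep : ProbabilityTheory.iIndepFun
      (fun i ω => (Xs i ω, Ys i ω)) P)
    (hident : ∀ i, Measure.map (fun ω => (Xs i ω, Ys i ω)) P
      = Measure.map (fun ω => (Xs 0 ω, Ys 0 ω)) P)
    (G : (Fin p → ℝ) → ℝ) (hG : Measurable G) (hGrange : ∀ x, G x ∈ Set.Ioo (0 : ℝ) 1)
    (hbern : ∀ A : Set (Fin p → ℝ), MeasurableSet A →
      (P {ω | Xs 0 ω ∈ A ∧ Ys 0 ω = true}).toReal
        = ∫ ω in {ω | Xs 0 ω ∈ A}, G (Xs 0 ω) ∂P)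
    -- (A3)
    (hA3 : ∀ (s : Fin p → Bool) (β : Fin p → ℝ), β ≠ 0 →
      0 < P {ω | ((if inOrth s (Xs 0 ω) then (1 : ℝ) else 0) +
                  (if inOrth s (-(Xs 0 ω)) then (1 : ℝ) else 0))
                * dotProduct (Xs 0 ω) β ≠ 0}) :
    ∀ᵐ ω ∂P, ∃ N : ℕ, ∀ n ≥ N,
      (Matrix.of fun (i : Fin n) (k : Fin p) => Xs i.1 ω k).rank = p ∧
      Integrable (fun β : Fin p → ℝ =>
        ∏ i : Fin n,
          if Ys i.1 ω then nPhi (dotProduct (fun k => Xs i.1 ω k) β)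
          else 1 - nPhi (dotProduct (fun k => Xs i.1 ω k) β)) := by
  have : NeZero p := ⟨by omega⟩
  have hcover : ∀ᵐ ω ∂P, ∀ s, ∃ i, inOrth s (signedObs (Ys i ω) (Xs i ω)) :=
    ae_all_iff.2 fun s =>
      (ae_frequently_mem_of_iIndepFun (fun i => (hXmeas i).prodMk (hYmeas i)) hindep hident
        (measurableSet_inOrth_signedObs s)
        (measure_inOrth_signedObs_pos (hXmeas 0) hG hGrange hbern s _
          (hA3 s 1 one_ne_zero))).mono fun _ h => h.exists
  filter_upwards [hcover] with ω hω
  choose i hi using hω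
  refine ⟨Finset.univ.sup i + 1, fun n hn => ?_⟩
  exact rank_eq_and_integrable_likelihood (fun j : Fin n => Xs j ω) (fun j => Ys j ω) fun s =>
    ⟨⟨i s, (Nat.lt_succ_of_le (Finset.le_sup (Finset.mem_univ s))).trans_le hn⟩, hi s⟩

open Classical in
/-- under (A1)-(A3), almost surely the posterior under the flat prior
is proper for all sufficiently large n: the design matrix eventually has full
column rank and the probit likelihood is integrable over ℝ^p. -/
theorem posterior_proper_eventually
    (p : ℕ) (hp : 1 ≤ p)
    (Ω : Type*) [MeasurableSpace Ω] (P : Measure Ω) [IsProbabilityMeasure P]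
    (Xs : ℕ → Ω → Fin p → ℝ) (Ys : ℕ → Ω → Bool)
    (hXmeas : ∀ i, Measurable (Xs i)) (hYmeas : ∀ i, Measurable (Ys i))
    -- (A1)
    (hindep : ProbabilityTheory.iIndepFun
      (fun i ω => (Xs i ω, Ys i ω)) P)
    (hident : ∀ i, Measure.map (fun ω => (Xs i ω, Ys i ω)) P
      = Measure.map (fun ω => (Xs 0 ω, Ys 0 ω)) P)
    (G : (Fin p → ℝ) → ℝ) (hG : Measurable G) (hGrange : ∀ x, G x ∈ Set.Ioo (0 : ℝ) 1)
    (hbern : ∀ A : Set (Fin p → ℝ), MeasurableSet A →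
      (P {ω | Xs 0 ω ∈ A ∧ Ys 0 ω = true}).toReal
        = ∫ ω in {ω | Xs 0 ω ∈ A}, G (Xs 0 ω) ∂P)
    -- (A2)
    (hint : ∀ k l, Integrable (fun ω => Xs 0 ω k * Xs 0 ω l) P)
    (hpd : (Matrix.of fun k l => ∫ ω, Xs 0 ω k * Xs 0 ω l ∂P).PosDef)
    -- (A3)
    (hA3 : ∀ (s : Fin p → Bool) (β : Fin p → ℝ), β ≠ 0 →
      0 < P {ω | ((if inOrth s (Xs 0 ω) then (1 : ℝ) else 0) +
                  (if inOrth s (-(Xs 0 ω)) then (1 : ℝ) else 0))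
                * dotProduct (Xs 0 ω) β ≠ 0}) :
    ∀ᵐ ω ∂P, ∃ N : ℕ, ∀ n ≥ N,
      (Matrix.of fun (i : Fin n) (k : Fin p) => Xs i.1 ω k).rank = p ∧
      Integrable (fun β : Fin p → ℝ =>
        ∏ i : Fin n,
          if Ys i.1 ω then nPhi (dotProduct (fun k => Xs i.1 ω k) β)
          else 1 - nPhi (dotProduct (fun k => Xs i.1 ω k) β)) :=
  posterior_proper_eventually_general p hp Ω P Xs Ys hXmeas hYmeas hindep hident G hG hGrange hbern
    hA3
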